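/- Let c, d : ℝⁿ → ℝ³ be symmetric multiaffine maps with diagonals C(u), D(u), and f : ℝ → ℝ affine. Then the map d̃ : ℝ^{n+1} → ℝ³ defined by d̃(u₀,…,uₙ) = (1/(n+1)) Σ_{i=0}^{n} [ f(u_i)·d(u₀,…,û_i,…,uₙ) + (1-f(u_i))·c(u₀,…,û_i,…,uₙ) ] is symmetric and multiaffine, and its diagonal is d̃(u,…,u) = (1-f(u))·C(u) + f(u)·D(u). -/

import Mathlib

/-- A map `(Fin n → ℝ) → ℝ³` is multiaffine if it is affine in each argument. -/
def MultiAffineFn {n : ℕ} (c : (Fin n → ℝ) → Fin 3 → ℝ) : Prop :=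
  ∀ (i : Fin n) (v : Fin n → ℝ) (s t l m : ℝ), l + m = 1 →
    c (Function.update v i (l * s + m * t)) =
      l • c (Function.update v i s) + m • c (Function.update v i t)

/-- A map `(Fin n → ℝ) → ℝ³` is symmetric if it is invariant under
permutations of its arguments. -/
def SymmetricFn {n : ℕ} (c : (Fin n → ℝ) → Fin 3 → ℝ) : Prop :=
  ∀ (σ : Equiv.Perm (Fin n)) (v : Fin n → ℝ), c (v ∘ σ) = c v

/-! With `F x = f x • d + (1 - f x) • c`, the map `d̃` averages `F (vᵢ) (v₀,…,v̂ᵢ,…,vₙ)` over `i`.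
Summing over all `i` makes every index play the same role, so `d̃` inherits symmetry from the
`F x`; it is multiaffine because each `vⱼ` enters a summand either as the distinguished argument,
where `F` is affine since `f` is, or as an argument of a multiaffine `F x`. On the diagonal all
`n + 1` summands equal `F u (u,…,u)`. -/

open Function

namespace Equiv.Perm

variable {n : ℕ}

/-- The permutation of `Fin n` that `σ` induces between the complements of `i` and of `σ i`,
both identified with `Fin n` through `succAbove`. -/
def removeNth (σ : Perm (Fin (n + 1))) (i : Fin (n + 1)) : Perm (Fin n) :=
  (finSuccAboveEquiv i).trans <|
    (σ.subtypeEquiv (p := (· ≠ i)) (q := (· ≠ σ i)) fun _ => σ.injective.ne_iff.symm).trans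
      (finSuccAboveEquiv (σ i)).symm

theorem succAbove_removeNth (σ : Perm (Fin (n + 1))) (i : Fin (n + 1)) (j : Fin n) :
    (σ i).succAbove (σ.removeNth i j) = σ (i.succAbove j) :=
  congrArg Subtype.val ((finSuccAboveEquiv (σ i)).apply_symm_apply _)

end Equiv.Perm

theorem Fin.removeNth_comp_perm {n : ℕ} {α : Type*} (v : Fin (n + 1) → α)
    (σ : Equiv.Perm (Fin (n + 1))) (i : Fin (n + 1)) :
    i.removeNth (v ∘ σ) = (σ i).removeNth v ∘ σ.removeNth i := by
  funext j
  simp only [Fin.removeNth, comp_apply, Equiv.Perm.succAbove_removeNth]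

section ClosureProperties

variable {n : ℕ} {c d : (Fin n → ℝ) → Fin 3 → ℝ}

theorem SymmetricFn.add (hc : SymmetricFn c) (hd : SymmetricFn d) : SymmetricFn (c + d) :=
  fun σ v => by simp only [Pi.add_apply, hc σ v, hd σ v]

theorem SymmetricFn.const_smul (hc : SymmetricFn c) (a : ℝ) : SymmetricFn (a • c) :=
  fun σ v => by simp only [Pi.smul_apply, hc σ v]

theorem MultiAffineFn.add (hc : MultiAffineFn c) (hd : MultiAffineFn d) :
    MultiAffineFn (c + d) := fun i v s t l m hlm => by
  simp only [Pi.add_apply, hc i v s t l m hlm, hd i v s t l m hlm, smul_add]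
  abel

theorem MultiAffineFn.const_smul (hc : MultiAffineFn c) (a : ℝ) : MultiAffineFn (a • c) :=
  fun i v s t l m hlm => by
    simp only [Pi.smul_apply, hc i v s t l m hlm, smul_add, smul_comm a]

theorem MultiAffineFn.sum {ι : Type*} (s : Finset ι) {g : ι → (Fin n → ℝ) → Fin 3 → ℝ}
    (hg : ∀ i ∈ s, MultiAffineFn (g i)) : MultiAffineFn fun v => ∑ i ∈ s, g i v :=
  fun j v a b l m hlm => by
    simp only [Finset.smul_sum, ← Finset.sum_add_distrib]
    exact Finset.sum_congr rfl fun i hi => hg i hi j v a b l m hlm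

end ClosureProperties

section RemoveNthMean

variable {n : ℕ} (F : ℝ → (Fin n → ℝ) → Fin 3 → ℝ)

noncomputable def removeNthMean (v : Fin (n + 1) → ℝ) : Fin 3 → ℝ :=
  ((n : ℝ) + 1)⁻¹ • ∑ i, F (v i) (i.removeNth v)

theorem symmetricFn_removeNthMean (hF : ∀ x, SymmetricFn (F x)) :
    SymmetricFn (removeNthMean F) := fun σ v => by
  unfold removeNthMean
  rw [← Equiv.sum_comp σ fun i => F (v i) (i.removeNth v)]
  congr 1
  refine Finset.sum_congr rfl fun i _ => ?_
  rw [Fin.removeNth_comp_perm, hF, comp_apply]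

theorem multiAffineFn_apply_removeNth (i : Fin (n + 1))
    (hF : ∀ w s t l m, l + m = 1 → F (l * s + m * t) w = l • F s w + m • F t w)
    (hFw : ∀ x, MultiAffineFn (F x)) :
    MultiAffineFn fun v : Fin (n + 1) → ℝ => F (v i) (i.removeNth v) := by
  intro j v s t l m hlm
  rcases eq_or_ne j i with rfl | hji
  · simp only [update_self, Fin.removeNth_update]
    exact hF _ s t l m hlm
  · obtain ⟨k, rfl⟩ := Fin.exists_succAbove_eq hji
    simp only [update_of_ne (Fin.succAbove_ne i k).symm, Fin.removeNth_update_succAbove]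
    exact hFw _ k _ s t l m hlm

theorem multiAffineFn_removeNthMean
    (hF : ∀ w s t l m, l + m = 1 → F (l * s + m * t) w = l • F s w + m • F t w)
    (hFw : ∀ x, MultiAffineFn (F x)) :
    MultiAffineFn (removeNthMean F) :=
  (MultiAffineFn.sum _ fun i _ => multiAffineFn_apply_removeNth F i hF hFw).const_smul _

theorem removeNthMean_const (u : ℝ) :
    removeNthMean F (fun _ => u) = F u (fun _ => u) := by
  have hn : ((n : ℝ) + 1) ≠ 0 := by positivity
  simp only [removeNthMean, Fin.removeNth_fun_const, Finset.sum_const, Finset.card_univ,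
    Fintype.card_fin, ← Nat.cast_smul_eq_nsmul ℝ, smul_smul, Nat.cast_succ, inv_mul_cancel₀ hn,
    one_smul]

end RemoveNthMean

/-- The blossom of the curve obtained by moving along the rulings of the ruled
surface between `C` and `D` by an affine factor `f`:
`d̃(u₀,…,uₙ) = (1/(n+1)) Σᵢ [f(uᵢ)·d(…ûᵢ…) + (1-f(uᵢ))·c(…ûᵢ…)]` is symmetric
and multiaffine, with diagonal `(1-f(u))·C(u) + f(u)·D(u)`. -/
theorem blossom_of_ruling_rescaling {n : ℕ}
    (c d : (Fin n → ℝ) → Fin 3 → ℝ)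
    (hcs : SymmetricFn c) (hcm : MultiAffineFn c)
    (hds : SymmetricFn d) (hdm : MultiAffineFn d)
    (C D : ℝ → Fin 3 → ℝ)
    (hC : ∀ u, C u = c (fun _ => u)) (hD : ∀ u, D u = d (fun _ => u))
    (f : ℝ → ℝ) (hf : ∃ a b : ℝ, ∀ u, f u = a * u + b)
    (dt : (Fin (n + 1) → ℝ) → Fin 3 → ℝ)
    (hdt : ∀ v : Fin (n + 1) → ℝ,
      dt v = ((n : ℝ) + 1)⁻¹ • ∑ i : Fin (n + 1),
        (f (v i) • d (v ∘ i.succAbove) + (1 - f (v i)) • c (v ∘ i.succAbove))) :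
    SymmetricFn dt ∧ MultiAffineFn dt ∧
      ∀ u : ℝ, dt (fun _ => u) = (1 - f u) • C u + f u • D u := by
  obtain ⟨a, b, hab⟩ := hf
  set F : ℝ → (Fin n → ℝ) → Fin 3 → ℝ := fun x => f x • d + (1 - f x) • c
  obtain rfl : dt = removeNthMean F := funext hdt
  have hF : ∀ w s t l m, l + m = 1 → F (l * s + m * t) w = l • F s w + m • F t w := by
    intro w s t l m hlm
    simp only [F, Pi.add_apply, Pi.smul_apply, hab]
    linear_combination (norm := module) hlm • (b • c w - b • d w - c w)
  refine ⟨symmetricFn_removeNthMean F fun x => (hds.const_smul _).add (hcs.const_smul _),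
    multiAffineFn_removeNthMean F hF fun x => (hdm.const_smul _).add (hcm.const_smul _),
    fun u => ?_⟩
  rw [removeNthMean_const, hC, hD, add_comm]
  rfl
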